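/- Let n ≥ 1, let ι = Fin n ⊕ Fin n, and equip ℂ^ι with the standard symplectic form ω(x, y) = Σᵢ (x(inl i) · y(inr i) − x(inr i) · y(inl i)). For t ∈ ℂˣ let D_t be the diagonal matrix with entry t at index inl 0, entry t⁻¹ at index inr 0, and entry 1 at every other index. Let M be an ι × ι complex matrix such that: (i) M preserves ω, i.e. ω(M.mulVec x, M.mulVec y) = ω(x, y) for all x, y; (ii) M fixes every standard basis vector e_j with j ≠ inl 0 and j ≠ inr 0 (M.mulVec e_j = e_j); and (iii) M commutes with D_t for every t ∈ ℂˣ. Then there exists a ∈ ℂˣ with M = D_a. -/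

import Mathlib

open Sum in
/-- The standard symplectic form `ω(x, y) = ∑ i, (x (inl i) * y (inr i) - x (inr i) * y (inl i))`
on `ℂ^(Fin n ⊕ Fin n)`, corresponding to `∑ dwᵢ ∧ dzᵢ`. -/
noncomputable def stdSymplForm (n : ℕ) (x y : (Fin n ⊕ Fin n) → ℂ) : ℂ :=
  ∑ i : Fin n, (x (inl i) * y (inr i) - x (inr i) * y (inl i))

open Sum in
/-- The diagonal matrix `D_t` with entry `t` at index `inl 0`, entry `t⁻¹` at index `inr 0`,
and entry `1` elsewhere. -/
noncomputable def Dmat (n : ℕ) [NeZero n] (t : ℂˣ) :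
    Matrix (Fin n ⊕ Fin n) (Fin n ⊕ Fin n) ℂ :=
  Matrix.diagonal fun j =>
    if j = inl 0 then (t : ℂ) else if j = inr 0 then ((t : ℂ))⁻¹ else 1

open Sum in
/-- A matrix preserving the standard symplectic form, fixing all standard basis vectors
`e_j` with `j ≠ inl 0, inr 0`, and commuting with the one-parameter torus `D_t`, is itself
equal to `D_a` for some `a ∈ ℂˣ`. -/
theorem eq_Dmat_of_symplectic_fixing_commuting
    (n : ℕ) [NeZero n] (M : Matrix (Fin n ⊕ Fin n) (Fin n ⊕ Fin n) ℂ)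
    (hsymp : ∀ x y : (Fin n ⊕ Fin n) → ℂ,
      stdSymplForm n (M.mulVec x) (M.mulVec y) = stdSymplForm n x y)
    (hfix : ∀ j : Fin n ⊕ Fin n, j ≠ inl 0 → j ≠ inr 0 →
      M.mulVec (Pi.single j 1) = Pi.single j 1)
    (hcomm : ∀ t : ℂˣ, M * Dmat n t = Dmat n t * M) :
    ∃ a : ℂˣ, M = Dmat n a := by
  classical
  set d : (Fin n ⊕ Fin n) → ℂ :=
    fun j => if j = inl 0 then (2 : ℂ) else if j = inr 0 then (2 : ℂ)⁻¹ else 1 with hd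
  have h2 : ((Units.mk0 (2:ℂ) two_ne_zero : ℂˣ) : ℂ) = (2 : ℂ) := rfl
  have hzero : ∀ i j, d j ≠ d i → M i j = 0 := by
    intro i j hne
    have := congrFun (congrFun (hcomm (Units.mk0 (2:ℂ) two_ne_zero)) i) j
    rw [Dmat] at this
    simp only [Matrix.mul_diagonal, Matrix.diagonal_mul, h2] at this
    have h' : M i j * (d j - d i) = 0 := by
      simp only [hd]; ring_nf; ring_nf at this; linear_combination this
    rcases mul_eq_zero.mp h' with h | h
    · exact h
    · exact absurd (sub_eq_zero.mp h) hne
  have hcol : ∀ j, j ≠ inl 0 → j ≠ inr 0 → ∀ i, M i j = if i = j then 1 else 0 := by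
    intro j hj1 hj2 i
    have := congrFun (hfix j hj1 hj2) i
    rw [Matrix.mulVec_single] at this
    rw [Pi.single_apply] at this
    simpa [eq_comm] using this
  -- entries of the distinguished columns
  have hcolL : ∀ i, i ≠ inl 0 → M i (inl 0) = 0 := by
    intro i hi
    apply hzero
    simp only [hd]
    split_ifs <;> first | contradiction | norm_num
  have hcolR : ∀ i, i ≠ inr 0 → M i (inr 0) = 0 := by
    intro i hi
    apply hzero
    simp only [hd]
    split_ifs <;> first | contradiction | norm_num
  set α := M (inl 0) (inl 0) with hα
  set β := M (inr 0) (inr 0) with hβ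
  -- the symplectic condition forces α * β = 1
  have hαβ : α * β = 1 := by
    have := hsymp (Pi.single (inl 0) 1) (Pi.single (inr 0) 1)
    rw [stdSymplForm, stdSymplForm] at this
    simp only [Matrix.mulVec_single, mul_one] at this
    have hr : ∑ i : Fin n, ((Pi.single (inl (0:Fin n)) (1:ℂ) : (Fin n ⊕ Fin n) → ℂ) (inl i) *
        (Pi.single (inr (0:Fin n)) (1:ℂ) : (Fin n ⊕ Fin n) → ℂ) (inr i) -
        (Pi.single (inl (0:Fin n)) (1:ℂ) : (Fin n ⊕ Fin n) → ℂ) (inr i) *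
        (Pi.single (inr (0:Fin n)) (1:ℂ) : (Fin n ⊕ Fin n) → ℂ) (inl i)) = 1 := by
      rw [Finset.sum_eq_single 0]
      · simp
      · intro b _ hb
        simp [Pi.single_apply, hb]
      · simp
    rw [hr] at this
    have hl : ∑ i : Fin n, ((fun i => M i (inl 0)) (inl i) * (fun i => M i (inr 0)) (inr i) -
        (fun i => M i (inl 0)) (inr i) * (fun i => M i (inr 0)) (inl i)) = α * β := by
      rw [Finset.sum_eq_single 0]
      · have h1 : M (inr 0) (inl 0) = 0 := hcolL _ (by simp)
        simp [hα, hβ, h1]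
      · intro b _ hb
        have h1 : M (inl b) (inl 0) = 0 := hcolL _ (by simp [hb])
        have h2 : M (inr b) (inl 0) = 0 := hcolL _ (by simp)
        simp [h1, h2]
      · simp
    rw [← hl]
    simpa only [MulOpposite.op_one, one_smul, Matrix.col_apply] using this
  have hα0 : α ≠ 0 := left_ne_zero_of_mul_eq_one hαβ
  refine ⟨Units.mk0 α hα0, ?_⟩
  have hβα : β = α⁻¹ := eq_inv_of_mul_eq_one_right hαβ
  ext i j
  rw [Dmat, Matrix.diagonal_apply]
  rcases eq_or_ne i j with rfl | hij
  · rw [if_pos rfl]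
    rcases eq_or_ne i (inl 0) with rfl | h1
    · simp [hα]
    · rcases eq_or_ne i (inr 0) with rfl | h2
      · rw [← hβ, hβα]
        simp [Units.val_inv_eq_inv_val]
      · rw [if_neg h1, if_neg h2]
        simpa using hcol i h1 h2 i
  · rw [if_neg hij]
    rcases eq_or_ne j (inl 0) with rfl | h1
    · exact hcolL i hij
    · rcases eq_or_ne j (inr 0) with rfl | h2
      · exact hcolR i hij
      · simpa [hij] using hcol j h1 h2 i
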